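/- The HST and LHST cost functions satisfy C_HST(U,V) ≤ M · C_LHST(U,V) for unitaries U, V on an M-qubit system, where C_LHST(U,V) = (1/M) Σ_{μ=1}^{M} C_LHST^{(μ)}(U,V), i.e., C_HST(U,V) ≤ Σ_μ C_LHST^{(μ)}(U,V). -/

import Mathlib

/-!
`Π_μ` is the Bell-pair projector at site `μ` tensored with identities elsewhere, so the `Π_μ` are
commuting star projections whose product over all sites is the rank-one projector onto `|Φ₊⟩`.
For commuting star projections `A, P` one has `(1 - P) - (A - A P) = (1 - A)(1 - P) ≥ 0`, so by
induction `1 - Π₁ ⋯ Π_M ≤ ∑_μ (1 - Π_μ)` in operator order. Evaluating this at `ψ`, a unit vector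
because `U ⊗ V*` is unitary, gives the inequality, since `⟨ψ|Φ₊⟩⟨Φ₊|ψ⟩ = |⟨Φ₊|ψ⟩|²`.
-/

open Matrix
open scoped MatrixOrder ComplexOrder Kronecker

section StarOrderedRing

variable {R : Type*} [Ring R] [PartialOrder R] [StarRing R] [StarOrderedRing R]

theorem IsStarProjection.sub_mul_le_one_sub {p q : R} (hp : IsStarProjection p)
    (hq : IsStarProjection q) (hpq : Commute p q) : p - p * q ≤ 1 - q := by
  have hcomm : Commute (1 - p) (1 - q) :=
    (Commute.one_right _).sub_right ((Commute.one_left q).sub_left hpq)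
  rw [← sub_nonneg]
  convert (hp.one_sub.mul hq.one_sub hcomm).nonneg using 1
  noncomm_ring

theorem one_sub_le_sum_one_sub {ι : Type*} [DecidableEq ι] {Q : Finset ι → R}
    (hQ : ∀ s, IsSelfAdjoint (Q s)) (hQ_mul : ∀ s t, Q s * Q t = Q (s ∪ t))
    (hQ_empty : Q ∅ = 1) (s : Finset ι) : 1 - Q s ≤ ∑ i ∈ s, (1 - Q {i}) := by
  have hproj (s : Finset ι) : IsStarProjection (Q s) :=
    ⟨by rw [IsIdempotentElem, hQ_mul, Finset.union_self], hQ s⟩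
  induction s using Finset.induction_on with
  | empty => simp [hQ_empty]
  | insert i s hi ih =>
    have hcomm : Commute (Q s) (Q {i}) := by
      rw [Commute, SemiconjBy, hQ_mul, hQ_mul, Finset.union_comm]
    rw [Finset.sum_insert hi, Finset.insert_eq, Finset.union_comm, ← hQ_mul, add_comm]
    calc 1 - Q s * Q {i} = (1 - Q s) + (Q s - Q s * Q {i}) := by abel
      _ ≤ ∑ j ∈ s, (1 - Q {j}) + (1 - Q {i}) :=
        add_le_add ih ((hproj s).sub_mul_le_one_sub (hproj {i}) hcomm)

end StarOrderedRing

namespace Matrix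

theorem re_dotProduct_mulVec_le_of_le {n 𝕜 : Type*} [Fintype n] [RCLike 𝕜]
    {A B : Matrix n n 𝕜} (h : A ≤ B) (v : n → 𝕜) :
    RCLike.re (star v ⬝ᵥ A *ᵥ v) ≤ RCLike.re (star v ⬝ᵥ B *ᵥ v) := by
  have := (le_iff.mp h).re_dotProduct_nonneg v
  rwa [sub_mulVec, dotProduct_sub, map_sub, sub_nonneg] at this

theorem re_dotProduct_vecMulVec_mulVec {n 𝕜 : Type*} [Fintype n] [RCLike 𝕜] (u v : n → 𝕜) :
    RCLike.re (star v ⬝ᵥ vecMulVec u (star u) *ᵥ v) = ‖star u ⬝ᵥ v‖ ^ 2 := by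
  rw [vecMulVec_mulVec, op_smul_eq_smul, dotProduct_smul, smul_eq_mul, star_dotProduct,
    norm_star, RCLike.star_def, RCLike.conj_mul, ← RCLike.ofReal_pow, RCLike.ofReal_re]

theorem star_mulVec_dotProduct_mulVec_of_mem_unitary {n R : Type*} [Fintype n] [DecidableEq n]
    [CommRing R] [StarRing R] {W : Matrix n n R} (hW : W ∈ unitary (Matrix n n R))
    (v : n → R) : star (W *ᵥ v) ⬝ᵥ W *ᵥ v = star v ⬝ᵥ v := by
  rw [star_mulVec, dotProduct_mulVec, vecMul_vecMul, ← star_eq_conjTranspose,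
    Unitary.star_mul_self_of_mem hW, vecMul_one]

variable {ι R : Type*} [Fintype ι] {α : ι → Type*} [CommSemiring R]

def piKronecker (k : ∀ i, Matrix (α i) (α i) R) : Matrix (∀ i, α i) (∀ i, α i) R :=
  of fun p q => ∏ i, k i (p i) (q i)

theorem piKronecker_mul [DecidableEq ι] [∀ i, Fintype (α i)] (k l : ∀ i, Matrix (α i) (α i) R) :
    piKronecker k * piKronecker l = piKronecker (k * l) := by
  ext p q
  simp only [piKronecker, mul_apply, of_apply, Pi.mul_apply, Finset.prod_univ_sum,
    Fintype.piFinset_univ, Finset.prod_mul_distrib]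

theorem piKronecker_one [∀ i, DecidableEq (α i)] :
    piKronecker (1 : ∀ i, Matrix (α i) (α i) R) = 1 := by
  ext p q
  simp only [piKronecker, of_apply, Pi.one_apply, one_apply, Finset.prod_boole,
    Finset.mem_univ, true_implies, funext_iff]

theorem conjTranspose_piKronecker [StarRing R] (k : ∀ i, Matrix (α i) (α i) R) :
    (piKronecker k)ᴴ = piKronecker (star k) := by
  ext p q
  simp [piKronecker, star_prod]

def piKroneckerOn [DecidableEq ι] [∀ i, DecidableEq (α i)] (P : ∀ i, Matrix (α i) (α i) R)
    (s : Finset ι) : Matrix (∀ i, α i) (∀ i, α i) R :=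
  piKronecker fun i => if i ∈ s then P i else 1

variable [DecidableEq ι] [∀ i, DecidableEq (α i)]

theorem piKroneckerOn_mul [∀ i, Fintype (α i)] {P : ∀ i, Matrix (α i) (α i) R}
    (hP : ∀ i, IsIdempotentElem (P i)) (s t : Finset ι) :
    piKroneckerOn P s * piKroneckerOn P t = piKroneckerOn P (s ∪ t) := by
  rw [piKroneckerOn, piKroneckerOn, piKronecker_mul, piKroneckerOn]
  congr 1
  ext1 i
  by_cases hs : i ∈ s <;> by_cases ht : i ∈ t <;> simp [hs, ht, (hP i).eq]

theorem piKroneckerOn_empty (P : ∀ i, Matrix (α i) (α i) R) : piKroneckerOn P ∅ = 1 := by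
  simp only [piKroneckerOn, Finset.notMem_empty, if_false]
  exact piKronecker_one

theorem isSelfAdjoint_piKroneckerOn [StarRing R] {P : ∀ i, Matrix (α i) (α i) R}
    (hP : ∀ i, IsSelfAdjoint (P i)) (s : Finset ι) : IsSelfAdjoint (piKroneckerOn P s) := by
  rw [IsSelfAdjoint, star_eq_conjTranspose, piKroneckerOn, conjTranspose_piKronecker]
  congr 1
  ext1 i
  by_cases hs : i ∈ s
  · simp only [Pi.star_apply, hs, if_true, (hP i).star_eq]
  · simp only [Pi.star_apply, hs, if_false, star_eq_conjTranspose, conjTranspose_one]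

end Matrix

noncomputable def bellPair : Matrix (Fin 2 × Fin 2) (Fin 2 × Fin 2) ℂ :=
  of fun x y => (1 / 2 : ℂ) * (if x.1 = x.2 then 1 else 0) * (if y.1 = y.2 then 1 else 0)

theorem isStarProjection_bellPair : IsStarProjection bellPair := by
  constructor
  · ext x y
    simp [bellPair, mul_apply, Fintype.sum_prod_type]
  · ext x y
    simp only [bellPair, star_apply, of_apply]
    split_ifs <;> simp

abbrev BellIndex (M : ℕ) := (Fin M → Fin 2) × (Fin M → Fin 2)

/-- `bellProj M {μ}` is the projector `Π_μ` onto the `μ`-th Bell pair and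
`bellProj M univ = |Φ₊⟩⟨Φ₊|`. -/
noncomputable def bellProj (M : ℕ) (s : Finset (Fin M)) : Matrix (BellIndex M) (BellIndex M) ℂ :=
  reindexAlgEquiv ℂ ℂ (Equiv.arrowProdEquivProdArrow _ _ _) (piKroneckerOn (fun _ => bellPair) s)

theorem bellProj_apply {M : ℕ} (s : Finset (Fin M)) (p q : BellIndex M) :
    bellProj M s p q = ∏ ν, (if ν ∈ s then bellPair else 1) (p.1 ν, p.2 ν) (q.1 ν, q.2 ν) :=
  rfl

theorem bellProj_mul (M : ℕ) (s t : Finset (Fin M)) :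
    bellProj M s * bellProj M t = bellProj M (s ∪ t) := by
  rw [bellProj, bellProj, ← map_mul,
    piKroneckerOn_mul fun _ => isStarProjection_bellPair.isIdempotentElem, bellProj]

theorem bellProj_empty (M : ℕ) : bellProj M ∅ = 1 := by
  rw [bellProj, piKroneckerOn_empty, map_one]

theorem isSelfAdjoint_bellProj (M : ℕ) (s : Finset (Fin M)) : IsSelfAdjoint (bellProj M s) := by
  rw [IsSelfAdjoint, star_eq_conjTranspose, bellProj, coe_reindexAlgEquiv, conjTranspose_reindex,
    ← star_eq_conjTranspose,
    isSelfAdjoint_piKroneckerOn (fun _ => isStarProjection_bellPair.isSelfAdjoint) s]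

theorem bellProj_singleton_apply {M : ℕ} (μ : Fin M) (p q : BellIndex M) :
    bellProj M {μ} p q =
      (1 / 2 : ℂ) * (if p.1 μ = p.2 μ then 1 else 0) * (if q.1 μ = q.2 μ then 1 else 0) *
        (if (∀ ν, ν ≠ μ → p.1 ν = q.1 ν ∧ p.2 ν = q.2 ν) then 1 else 0) := by
  simp only [bellProj_apply, Finset.mem_singleton]
  rw [Fintype.prod_eq_mul_prod_compl μ, if_pos rfl,
    Finset.prod_congr rfl (g := fun ν => if p.1 ν = q.1 ν ∧ p.2 ν = q.2 ν then 1 else 0),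
    Finset.prod_boole]
  · simp [bellPair]
  · intro ν hν
    simp_all [one_apply]

noncomputable def bellState (M : ℕ) : BellIndex M → ℂ :=
  fun p => if p.1 = p.2 then ((1 / Real.sqrt (2 ^ M) : ℝ) : ℂ) else 0

theorem bellState_mul_star_bellState (M : ℕ) (p q : BellIndex M) :
    bellState M p * star (bellState M q) =
      (1 / 2 : ℂ) ^ M * (if p.1 = p.2 then 1 else 0) * (if q.1 = q.2 then 1 else 0) := by
  have hsq : ((1 / Real.sqrt (2 ^ M) : ℝ) : ℂ) * ((1 / Real.sqrt (2 ^ M) : ℝ) : ℂ) =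
      (1 / 2 : ℂ) ^ M := by
    rw [← Complex.ofReal_mul, div_mul_div_comm, one_mul, Real.mul_self_sqrt (by positivity)]
    push_cast
    rw [div_pow, one_pow]
  simp only [bellState]
  split_ifs <;>
    simp only [mul_one, mul_zero, zero_mul, star_zero, Complex.star_def, Complex.conj_ofReal, hsq]

theorem star_bellState_dotProduct_bellState (M : ℕ) : star (bellState M) ⬝ᵥ bellState M = 1 := by
  simp only [dotProduct, Pi.star_apply, mul_comm (star _), bellState_mul_star_bellState]
  simp [Fintype.sum_prod_type, Finset.sum_ite_eq]

theorem bellProj_univ (M : ℕ) :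
    bellProj M Finset.univ = vecMulVec (bellState M) (star (bellState M)) := by
  ext p q
  simp only [bellProj_apply, Finset.mem_univ, if_true, of_apply, vecMulVec_apply, Pi.star_apply,
    bellState_mul_star_bellState, bellPair, Finset.prod_mul_distrib, Finset.prod_const,
    Finset.card_univ, Fintype.card_fin, Finset.prod_boole, forall_const, ← funext_iff]

/-- `C_HST(U,V) ≤ ∑_μ C_LHST^{(μ)}(U,V)` (i.e. `C_HST ≤ M · C_LHST`) for unitaries
`U, V` on an `M`-qubit system. Here `Φ` is the tensor product of `M` Bell pairs
between the registers `A` and `B`, `ψ = (U ⊗ V*) Φ`, `Proj μ` is the projector onto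
the `μ`-th Bell pair, `C_HST = 1 - |⟨Φ|ψ⟩|²` and `C_LHST^{(μ)} = 1 - ⟨ψ|Proj μ|ψ⟩`. -/
theorem stmt_6 (M : ℕ)
    (U V : Matrix.unitaryGroup (Fin M → Fin 2) ℂ)
    (Φ : ((Fin M → Fin 2) × (Fin M → Fin 2)) → ℂ)
    (hΦ : ∀ p, Φ p = if p.1 = p.2 then ((1 / Real.sqrt (2 ^ M) : ℝ) : ℂ) else 0)
    (Proj : Fin M →
      Matrix ((Fin M → Fin 2) × (Fin M → Fin 2)) ((Fin M → Fin 2) × (Fin M → Fin 2)) ℂ)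
    (hProj : ∀ μ p q, Proj μ p q =
      (1 / 2 : ℂ) * (if p.1 μ = p.2 μ then 1 else 0) * (if q.1 μ = q.2 μ then 1 else 0) *
        (if (∀ ν, ν ≠ μ → p.1 ν = q.1 ν ∧ p.2 ν = q.2 ν) then 1 else 0))
    (ψ : ((Fin M → Fin 2) × (Fin M → Fin 2)) → ℂ)
    (hψ : ψ = (Matrix.of (fun p q : (Fin M → Fin 2) × (Fin M → Fin 2) =>
      (U : Matrix (Fin M → Fin 2) (Fin M → Fin 2) ℂ) p.1 q.1 *
        star ((V : Matrix (Fin M → Fin 2) (Fin M → Fin 2) ℂ) p.2 q.2))).mulVec Φ) :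
    1 - ‖star Φ ⬝ᵥ ψ‖ ^ 2 ≤ ∑ μ, (1 - (star ψ ⬝ᵥ (Proj μ).mulVec ψ).re) := by
  have hΦ_eq : Φ = bellState M := funext hΦ
  have hProj_eq (μ : Fin M) : Proj μ = bellProj M {μ} := by
    ext p q
    rw [hProj, bellProj_singleton_apply]
  have hW : (U : Matrix (Fin M → Fin 2) (Fin M → Fin 2) ℂ) ⊗ₖ
      (UnitaryGroup.map_star V : Matrix (Fin M → Fin 2) (Fin M → Fin 2) ℂ) ∈
        unitary (Matrix (BellIndex M) (BellIndex M) ℂ) :=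
    kronecker_mem_unitary U.2 (UnitaryGroup.map_star V).2
  have hψ_norm : star ψ ⬝ᵥ ψ = 1 := by
    rw [hψ, hΦ_eq]
    exact (star_mulVec_dotProduct_mulVec_of_mem_unitary hW _).trans
      (star_bellState_dotProduct_bellState M)
  calc 1 - ‖star Φ ⬝ᵥ ψ‖ ^ 2
      = RCLike.re (star ψ ⬝ᵥ (1 - bellProj M Finset.univ) *ᵥ ψ) := by
        rw [sub_mulVec, one_mulVec, dotProduct_sub, hψ_norm, map_sub, bellProj_univ, ← hΦ_eq,
          re_dotProduct_vecMulVec_mulVec, RCLike.one_re]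
    _ ≤ RCLike.re (star ψ ⬝ᵥ (∑ μ, (1 - bellProj M {μ})) *ᵥ ψ) :=
        re_dotProduct_mulVec_le_of_le (one_sub_le_sum_one_sub (isSelfAdjoint_bellProj M)
          (bellProj_mul M) (bellProj_empty M) Finset.univ) ψ
    _ = ∑ μ, (1 - (star ψ ⬝ᵥ (Proj μ).mulVec ψ).re) := by
        simp [sum_mulVec, dotProduct_sum, sub_mulVec, dotProduct_sub, hψ_norm, hProj_eq]
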